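/- Let K be any commutative ring and let n, k ≥ 0. Then the weight-k component U(K^n)_k is a free K-module of finite rank, and its rank equals 1 if k = 0, 2n if k = 1, (3n² − n)/2 if k = 2, and 2·(n choose k) if k ≥ 3. -/

import Mathlib

/-!
Universal enveloping algebra of the abelian alternative algebra `K^n`.

`T = Tens_K(K^n ⊕ K^n)`; `l_a` (resp. `r_a`) is the image of `(a,0)` (resp. `(0,a)`).
`U(K^n)` is the quotient of `T` by the two-sided ideal generated by
`l_a·l_a`, `r_a·r_a`, `l_b·l_a + r_a·r_b`, `r_b·l_a − l_a·r_b − r_a·r_b`.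
-/

noncomputable section

/-- `l_a ∈ Tens_K(K^n ⊕ K^n)`. -/
def lT (K : Type) [CommRing K] (n : ℕ) (a : Fin n → K) :
    TensorAlgebra K ((Fin n → K) × (Fin n → K)) :=
  TensorAlgebra.ι K (a, 0)

/-- `r_a ∈ Tens_K(K^n ⊕ K^n)`. -/
def rT (K : Type) [CommRing K] (n : ℕ) (a : Fin n → K) :
    TensorAlgebra K ((Fin n → K) × (Fin n → K)) :=
  TensorAlgebra.ι K (0, a)

/-- The relations defining `U(K^n)`: quotienting by this relation is the same as
quotienting by the two-sided ideal generated by the listed elements. -/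
inductive URel (K : Type) [CommRing K] (n : ℕ) :
    TensorAlgebra K ((Fin n → K) × (Fin n → K)) →
    TensorAlgebra K ((Fin n → K) × (Fin n → K)) → Prop
  | ll (a : Fin n → K) : URel K n (lT K n a * lT K n a) 0
  | rr (a : Fin n → K) : URel K n (rT K n a * rT K n a) 0
  | llrr (a b : Fin n → K) : URel K n (lT K n b * lT K n a + rT K n a * rT K n b) 0
  | rl (a b : Fin n → K) :
      URel K n (rT K n b * lT K n a - lT K n a * rT K n b - rT K n a * rT K n b) 0

/-- The universal enveloping algebra `U(K^n)`. -/
def Ualg (K : Type) [CommRing K] (n : ℕ) : Type := RingQuot (URel K n)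

instance (K : Type) [CommRing K] (n : ℕ) : Ring (Ualg K n) :=
  inferInstanceAs (Ring (RingQuot (URel K n)))

instance (K : Type) [CommRing K] (n : ℕ) : Algebra K (Ualg K n) :=
  inferInstanceAs (Algebra K (RingQuot (URel K n)))

/-- Image of `l_a` in `U(K^n)`. -/
def lU (K : Type) [CommRing K] (n : ℕ) (a : Fin n → K) : Ualg K n :=
  RingQuot.mkAlgHom K (URel K n) (lT K n a)

/-- Image of `r_a` in `U(K^n)`. -/
def rU (K : Type) [CommRing K] (n : ℕ) (a : Fin n → K) : Ualg K n :=
  RingQuot.mkAlgHom K (URel K n) (rT K n a)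

/-- The weight-one part `V ⊆ U(K^n)`: the span of all `l_a` and `r_a`. -/
def V (K : Type) [CommRing K] (n : ℕ) : Submodule K (Ualg K n) :=
  Submodule.span K (Set.range (lU K n) ∪ Set.range (rU K n))



/-!
The relations give `l_a l_b = r_a r_b` and `r_b l_a = l_a r_b + r_a r_b`, so with
`Vl = span {l_a}` and `Vr = span {r_a}` one gets `V^(k+1) = Vl Vr^k + Vr^(k+1)`. Since `r_a² = 0`,
`a ↦ r_a` extends to the exterior algebra, and `Vr^k` is the image of `⋀^k K^n`. For `k ≠ 1` the
map `(a₀, …, a_k) ↦ l_{a₀} r_{a₁} ⋯ r_{a_k}` is alternating (for `k ≥ 2` because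
`l_a r_a r_b = l_a l_a l_b = 0`), so `Vl Vr^k` is the image of `⋀^(k+1) K^n`, while `Vl Vr` is
spanned by the `n²` products `l_i r_j`. The images of the standard bases of the exterior powers
are linearly independent: in weight `≠ 2` this is seen on the representation of `U(K^n)` on
`⋀K^n × ⋀K^n` in which `l_a` and `r_a` act by `a ∧ -` tensored with the matrices
`[[0,1],[1,0]]` and `[[-1,0],[-1,1]]`, and in weight `2` on a truncation of `U(K^n)` to the
weights `≤ 2`.
-/

lemma ExteriorAlgebra.ι_mul_ι_comm {R M : Type*} [CommRing R] [AddCommGroup M] [Module R M]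
    (a b : M) : ι R a * ι R b = -(ι R b * ι R a) :=
  eq_neg_of_add_eq_zero_left (ι_add_mul_swap a b)

lemma Module.Basis.linearIndependent_exteriorPower {R M I : Type*} [CommRing R] [AddCommGroup M]
    [Module R M] [LinearOrder I] (b : Module.Basis I R M) (k : ℕ) :
    LinearIndependent R fun s => (b.exteriorPower k s : _root_.ExteriorAlgebra R M) :=
  (b.exteriorPower k).linearIndependent.map' (⋀[R]^k M).subtype (Submodule.ker_subtype _)

lemma Module.Basis.span_range_comp {ι R N M : Type*} [Semiring R] [AddCommMonoid N] [Module R N]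
    [AddCommMonoid M] [Module R M] (b : Module.Basis ι R N) (g : N →ₗ[R] M) :
    Submodule.span R (Set.range (g ∘ b)) = LinearMap.range g := by
  rw [Set.range_comp, ← Submodule.map_span, b.span_eq, LinearMap.range_eq_map]

lemma Submodule.nonempty_basis_fin_of_span_eq {R M ι : Type*} [Semiring R] [AddCommMonoid M]
    [Module R M] [Finite ι] {W : Submodule R M} {u : ι → M} (hli : LinearIndependent R u)
    (hspan : span R (Set.range u) = W) : Nonempty (Module.Basis (Fin (Nat.card ι)) R W) :=
  ⟨((Module.Basis.span hli).map (LinearEquiv.ofEq _ _ hspan)).reindex (Finite.equivFin ι)⟩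

lemma Nat.three_mul_sq_sub_self_div_two (n : ℕ) : (3 * n ^ 2 - n) / 2 = n * n + n.choose 2 := by
  have h : 3 * (n * n) - n = (n * n - n) + n * n * 2 := by
    have := Nat.le_mul_self n
    omega
  rw [Nat.choose_two_right, sq, Nat.mul_sub_one, h, Nat.add_mul_div_right _ _ two_pos, add_comm]

namespace Ualg

variable {K : Type} [CommRing K] {n : ℕ}

open ExteriorAlgebra Submodule
open scoped TensorProduct

local notation "Λ" => ExteriorAlgebra K (Fin n → K)

variable (K n) in
def lUₗ : (Fin n → K) →ₗ[K] Ualg K n :=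
  (RingQuot.mkAlgHom K (URel K n)).toLinearMap ∘ₗ TensorAlgebra.ι K ∘ₗ LinearMap.inl K _ _

variable (K n) in
def rUₗ : (Fin n → K) →ₗ[K] Ualg K n :=
  (RingQuot.mkAlgHom K (URel K n)).toLinearMap ∘ₗ TensorAlgebra.ι K ∘ₗ LinearMap.inr K _ _

@[simp] lemma lUₗ_apply (a : Fin n → K) : lUₗ K n a = lU K n a := rfl

@[simp] lemma rUₗ_apply (a : Fin n → K) : rUₗ K n a = rU K n a := rfl

lemma rU_mul_self (a : Fin n → K) : rU K n a * rU K n a = 0 := by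
  have h := RingQuot.mkAlgHom_rel K (URel.rr a)
  rwa [map_mul, map_zero] at h

lemma lU_mul_lU_add_rU_mul_rU (a b : Fin n → K) :
    lU K n b * lU K n a + rU K n a * rU K n b = 0 := by
  have h := RingQuot.mkAlgHom_rel K (URel.llrr a b)
  rwa [map_add, map_mul, map_mul, map_zero] at h

lemma rU_mul_lU (a b : Fin n → K) :
    rU K n b * lU K n a = lU K n a * rU K n b + rU K n a * rU K n b := by
  have h := RingQuot.mkAlgHom_rel K (URel.rl a b)
  rwa [map_sub, map_sub, map_mul, map_mul, map_mul, map_zero, sub_sub, sub_eq_zero] at h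

variable (K n) in
def ofExterior : Λ →ₐ[K] Ualg K n := ExteriorAlgebra.lift K ⟨rUₗ K n, rU_mul_self⟩

@[simp] lemma ofExterior_ι (a : Fin n → K) : ofExterior K n (ι K a) = rU K n a :=
  ExteriorAlgebra.lift_ι_apply K _ _ _

lemma ofExterior_ιMulti {k : ℕ} (w : Fin k → Fin n → K) :
    ofExterior K n (ιMulti K k w) = (List.ofFn fun i => rU K n (w i)).prod := by
  simp [ιMulti_apply, map_list_prod, List.map_ofFn, Function.comp_def]

lemma rU_mul_rU (a b : Fin n → K) : rU K n a * rU K n b = -(rU K n b * rU K n a) := by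
  simp only [← ofExterior_ι, ← map_mul, ← map_neg, ι_mul_ι_comm a b]

lemma lU_mul_lU (a b : Fin n → K) : lU K n a * lU K n b = rU K n a * rU K n b := by
  rw [eq_neg_of_add_eq_zero_left (lU_mul_lU_add_rU_mul_rU b a), rU_mul_rU, neg_neg]

lemma lU_mul_self (a : Fin n → K) : lU K n a * lU K n a = 0 := by
  rw [lU_mul_lU, rU_mul_self]

lemma lU_mul_rU_mul_rU_self (a b : Fin n → K) : lU K n a * (rU K n a * rU K n b) = 0 := by
  rw [← lU_mul_lU, ← mul_assoc, lU_mul_self, zero_mul]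

section lift

variable {A : Type*} [Ring A] [Algebra K A]

def lift (l r : (Fin n → K) →ₗ[K] A) (hrr : ∀ a, r a * r a = 0)
    (hlr : ∀ a b, l b * l a + r a * r b = 0) (hrl : ∀ a b, r b * l a = l a * r b + r a * r b) :
    Ualg K n →ₐ[K] A :=
  RingQuot.liftAlgHom K ⟨TensorAlgebra.lift K (l.coprod r), fun x y h => by
    cases h with
    | ll a => simpa [lT, hrr] using hlr a a
    | rr a => simpa [rT] using hrr a
    | llrr a b => simpa [lT, rT] using hlr a b
    | rl a b => simp [lT, rT, hrl, sub_sub]⟩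

variable {l r : (Fin n → K) →ₗ[K] A} {hrr : ∀ a, r a * r a = 0}
  {hlr : ∀ a b, l b * l a + r a * r b = 0} {hrl : ∀ a b, r b * l a = l a * r b + r a * r b}

@[simp] lemma lift_lU (a : Fin n → K) : lift l r hrr hlr hrl (lU K n a) = l a :=
  (RingQuot.liftAlgHom_mkAlgHom_apply K _ _ _).trans (by simp [lT])

@[simp] lemma lift_rU (a : Fin n → K) : lift l r hrr hlr hrl (rU K n a) = r a :=
  (RingQuot.liftAlgHom_mkAlgHom_apply K _ _ _).trans (by simp [rT])

end lift

variable (K n) in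
def Vl : Submodule K (Ualg K n) := LinearMap.range (lUₗ K n)

variable (K n) in
def Vr : Submodule K (Ualg K n) := LinearMap.range (rUₗ K n)

lemma V_eq_sup : V K n = Vl K n ⊔ Vr K n := by
  rw [V, span_union, Vl, Vr, ← span_eq (LinearMap.range (lUₗ K n)),
    ← span_eq (LinearMap.range (rUₗ K n)), LinearMap.coe_range, LinearMap.coe_range]
  rfl

lemma Vr_pow_eq_map_exteriorPower (k : ℕ) :
    Vr K n ^ k = (⋀[K]^k (Fin n → K)).map (ofExterior K n).toLinearMap := by
  have : Vr K n = (LinearMap.range (ι K)).map (ofExterior K n).toLinearMap := by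
    rw [Vr, ← LinearMap.range_comp]
    congr 1
    ext a
    simp
  rw [this]
  exact (Submodule.map_pow _ (ofExterior K n) k).symm

lemma Vl_mul_Vl_le : Vl K n * Vl K n ≤ Vr K n * Vr K n := by
  rw [mul_le]
  rintro - ⟨a, rfl⟩ - ⟨b, rfl⟩
  rw [lUₗ_apply, lUₗ_apply, lU_mul_lU]
  exact mul_mem_mul ⟨a, rfl⟩ ⟨b, rfl⟩

lemma Vr_mul_Vl_le : Vr K n * Vl K n ≤ Vl K n * Vr K n ⊔ Vr K n * Vr K n := by
  rw [mul_le]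
  rintro - ⟨b, rfl⟩ - ⟨a, rfl⟩
  rw [rUₗ_apply, lUₗ_apply, rU_mul_lU]
  exact add_mem (mem_sup_left (mul_mem_mul ⟨a, rfl⟩ ⟨b, rfl⟩))
    (mem_sup_right (mul_mem_mul ⟨a, rfl⟩ ⟨b, rfl⟩))

lemma V_pow_succ (k : ℕ) : V K n ^ (k + 1) = Vl K n * Vr K n ^ k ⊔ Vr K n ^ (k + 1) := by
  have hl : Vl K n ≤ V K n := V_eq_sup (K := K) ▸ le_sup_left
  have hr : Vr K n ≤ V K n := V_eq_sup (K := K) ▸ le_sup_right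
  refine le_antisymm ?_ (sup_le ?_ (pow_le_pow_left' hr _))
  · induction k with
    | zero => simp [V_eq_sup]
    | succ k ih =>
      set L := Vl K n
      set R := Vr K n
      have hLL : L * (L * R ^ k) ≤ R ^ (k + 2) := by
        rw [← mul_assoc, pow_succ', pow_succ', ← mul_assoc]
        exact mul_le_mul_left Vl_mul_Vl_le _
      have hRL : R * (L * R ^ k) ≤ L * R ^ (k + 1) ⊔ R ^ (k + 2) := by
        rw [← mul_assoc, pow_succ' R (k + 1), pow_succ', ← mul_assoc, ← mul_assoc,
          ← Submodule.sup_mul]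
        exact mul_le_mul_left Vr_mul_Vl_le _
      calc V K n ^ (k + 2) = (L ⊔ R) * V K n ^ (k + 1) := by rw [pow_succ', V_eq_sup]
        _ ≤ (L ⊔ R) * (L * R ^ k ⊔ R ^ (k + 1)) := mul_le_mul_right ih _
        _ = L * (L * R ^ k) ⊔ L * R ^ (k + 1) ⊔ (R * (L * R ^ k) ⊔ R ^ (k + 2)) := by
          rw [Submodule.sup_mul, Submodule.mul_sup, Submodule.mul_sup, ← pow_succ' R (k + 1)]
        _ ≤ L * R ^ (k + 1) ⊔ R ^ (k + 2) :=
          sup_le (sup_le (hLL.trans le_sup_right) le_sup_left) (sup_le hRL le_sup_right)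
  · rw [pow_succ']
    exact mul_le_mul' hl (pow_le_pow_left' hr k)

variable (K n) in
def rMonomial (k : ℕ) (s : Set.powersetCard (Fin n) k) : Ualg K n :=
  ofExterior K n ((Pi.basisFun K (Fin n)).exteriorPower k s)

lemma span_rMonomial (k : ℕ) : span K (Set.range (rMonomial K n k)) = Vr K n ^ k := by
  rw [Vr_pow_eq_map_exteriorPower, ← Submodule.range_subtype (⋀[K]^k (Fin n → K)),
    ← LinearMap.range_comp, ← ((Pi.basisFun K (Fin n)).exteriorPower k).span_range_comp]
  rfl

variable (K n) in
def lrMonomial (p : Fin n × Fin n) : Ualg K n :=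
  lU K n (Pi.single p.1 1) * rU K n (Pi.single p.2 1)

lemma span_lrMonomial : span K (Set.range (lrMonomial K n)) = Vl K n * Vr K n := by
  refine le_antisymm (span_le.2 ?_) ?_
  · rintro - ⟨p, rfl⟩
    exact mul_mem_mul ⟨_, rfl⟩ ⟨_, rfl⟩
  · rw [Vl, Vr, ← (Pi.basisFun K (Fin n)).span_range_comp,
      ← (Pi.basisFun K (Fin n)).span_range_comp, span_mul_span]
    refine span_mono ?_
    rintro - ⟨-, ⟨i, rfl⟩, -, ⟨j, rfl⟩, rfl⟩
    exact ⟨(i, j), by simp [lrMonomial]⟩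

variable (K n) in
def lMultilinear (k : ℕ) : MultilinearMap K (fun _ : Fin (k + 1) => Fin n → K) (Ualg K n) :=
  (MultilinearMap.mkPiAlgebraFin K (k + 1) (Ualg K n)).compLinearMap
    (Fin.cons (lUₗ K n) fun _ => rUₗ K n)

lemma lMultilinear_apply {k : ℕ} (v : Fin (k + 1) → Fin n → K) :
    lMultilinear K n k v = lU K n (v 0) * ofExterior K n (ιMulti K k (Fin.tail v)) := by
  simp [lMultilinear, ofExterior_ιMulti, List.ofFn_succ, Fin.tail]

lemma lU_mul_ofExterior_ιMulti_eq_zero {k : ℕ} (hk : 2 ≤ k) {a : Fin n → K}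
    {w : Fin k → Fin n → K} (ha : a ∈ Set.range w) :
    lU K n a * ofExterior K n (ιMulti K k w) = 0 := by
  obtain ⟨m, rfl⟩ : ∃ m, k = m + 2 := ⟨k - 2, by omega⟩
  obtain ⟨j, hj⟩ := ha
  -- move the occurrence of `a` to the front, then `l_a r_a r_b = 0`
  set w' := w ∘ Equiv.swap 0 j
  have hw : w = w' ∘ Equiv.swap 0 j := by ext1 i; simp [w']
  have hw'0 : w' 0 = a := by simp [w', hj]
  rw [hw, AlternatingMap.map_perm, Units.smul_def, map_zsmul, mul_smul_comm, ιMulti_succ_apply,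
    ιMulti_succ_apply, map_mul, map_mul, ofExterior_ι, ofExterior_ι, Matrix.vecTail,
    Function.comp_apply, hw'0, ← mul_assoc, ← mul_assoc, mul_assoc (lU K n _),
    lU_mul_rU_mul_rU_self, zero_mul, smul_zero]

variable (K n) in
def lAlternating (k : ℕ) (hk : k ≠ 1) : (Fin n → K) [⋀^Fin (k + 1)]→ₗ[K] Ualg K n where
  __ := lMultilinear K n k
  map_eq_zero_of_eq' v p q hpq hne := by
    change lMultilinear K n k v = 0
    rw [lMultilinear_apply]
    have hk2 : 2 ≤ k := by
      rcases k with _ | _ | k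
      · exact absurd (Fin.subsingleton_one.elim p q) hne
      · exact absurd rfl hk
      · omega
    induction p using Fin.cases with
    | zero =>
      induction q using Fin.cases with
      | zero => exact absurd rfl hne
      | succ j => exact lU_mul_ofExterior_ιMulti_eq_zero hk2 ⟨j, hpq.symm⟩
    | succ i =>
      induction q using Fin.cases with
      | zero => exact lU_mul_ofExterior_ιMulti_eq_zero hk2 ⟨i, hpq⟩
      | succ j =>
        rw [(ιMulti K k).map_eq_zero_of_eq _ (i := i) (j := j) hpq
          (fun h => hne (congrArg Fin.succ h)), map_zero, mul_zero]

variable (K n) in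
def lOfExteriorPower (k : ℕ) (hk : k ≠ 1) : ⋀[K]^(k + 1) (Fin n → K) →ₗ[K] Ualg K n :=
  exteriorPower.alternatingMapLinearEquiv (lAlternating K n k hk)

lemma lOfExteriorPower_ιMulti {k : ℕ} (hk : k ≠ 1) (v : Fin (k + 1) → Fin n → K) :
    lOfExteriorPower K n k hk (exteriorPower.ιMulti K (k + 1) v) =
      lU K n (v 0) * ofExterior K n (ιMulti K k (Fin.tail v)) := by
  rw [lOfExteriorPower, exteriorPower.alternatingMapLinearEquiv_apply_ιMulti]
  exact lMultilinear_apply v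

lemma range_lOfExteriorPower {k : ℕ} (hk : k ≠ 1) :
    LinearMap.range (lOfExteriorPower K n k hk) = Vl K n * Vr K n ^ k := by
  refine le_antisymm ?_ ?_
  · rw [LinearMap.range_eq_map, ← exteriorPower.ιMulti_span, map_span, span_le]
    rintro - ⟨-, ⟨v, rfl⟩, rfl⟩
    rw [SetLike.mem_coe, lOfExteriorPower_ιMulti, Vr_pow_eq_map_exteriorPower]
    exact mul_mem_mul ⟨v 0, rfl⟩ ⟨_, (exteriorPower.ιMulti K k (Fin.tail v)).2, rfl⟩
  · rw [Vr_pow_eq_map_exteriorPower, mul_le]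
    rintro - ⟨a, rfl⟩ - ⟨z, hz, rfl⟩
    rw [← exteriorPower.ιMulti_span_fixedDegree] at hz
    induction hz using span_induction with
    | mem z hz =>
      obtain ⟨w, rfl⟩ := hz
      exact ⟨exteriorPower.ιMulti K (k + 1) (Fin.cons a w), by simp [lOfExteriorPower_ιMulti]⟩
    | zero => simp
    | add x y _ _ hx hy => simpa [mul_add] using add_mem hx hy
    | smul c x _ hx => simpa using smul_mem _ c hx

variable (K n) in
def lMonomial (k : ℕ) (hk : k ≠ 1) (t : Set.powersetCard (Fin n) (k + 1)) : Ualg K n :=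
  lOfExteriorPower K n k hk ((Pi.basisFun K (Fin n)).exteriorPower (k + 1) t)

lemma span_lMonomial {k : ℕ} (hk : k ≠ 1) :
    span K (Set.range (lMonomial K n k hk)) = Vl K n * Vr K n ^ k := by
  rw [← range_lOfExteriorPower hk,
    ← ((Pi.basisFun K (Fin n)).exteriorPower (k + 1)).span_range_comp]
  rfl

variable (K n) in
def extL : (Fin n → K) →ₗ[K] Module.End K (Λ × Λ) :=
  LinearMap.mk₂ K (fun a p => (ι K a * p.2, ι K a * p.1))
    (by intros; ext <;> simp [add_mul]) (by intros; ext <;> simp)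
    (by intros; ext <;> simp [mul_add]) (by intros; ext <;> simp)

variable (K n) in
def extR : (Fin n → K) →ₗ[K] Module.End K (Λ × Λ) :=
  LinearMap.mk₂ K (fun a p => (-(ι K a * p.1), ι K a * (p.2 - p.1)))
    (by intros; ext <;> simp [add_mul, add_comm]) (by intros; ext <;> simp)
    (by intros; ext <;> simp [mul_add, add_comm, add_sub_add_comm])
    (by intros; ext <;> simp [← smul_sub])

@[simp] lemma extL_apply (a : Fin n → K) (p : Λ × Λ) :
    extL K n a p = (ι K a * p.2, ι K a * p.1) := rfl

@[simp] lemma extR_apply (a : Fin n → K) (p : Λ × Λ) :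
    extR K n a p = (-(ι K a * p.1), ι K a * (p.2 - p.1)) := rfl

variable (K n) in
/-- The relations hold because `J = [[0,1],[1,0]]` and `N = [[-1,0],[-1,1]]` satisfy
`J² = N² = 1` and `JN + NJ = -1`, while the `ι a` anticommute and square to zero. -/
def extRep : Ualg K n →ₐ[K] Module.End K (Λ × Λ) :=
  lift (extL K n) (extR K n)
    (fun a => by ext p <;> simp [← mul_assoc])
    (fun a b => by ext p <;> simp [← mul_assoc, ι_mul_ι_comm b a])
    (fun a b => by ext p <;> simp [← mul_assoc, ι_mul_ι_comm b a])

@[simp] lemma extRep_lU (a : Fin n → K) : extRep K n (lU K n a) = extL K n a := lift_lU a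

@[simp] lemma extRep_rU (a : Fin n → K) : extRep K n (rU K n a) = extR K n a := lift_rU a

lemma extRep_ofExterior_apply (z w : Λ) :
    extRep K n (ofExterior K n z) (0, w) = (0, z * w) := by
  induction z using ExteriorAlgebra.induction generalizing w with
  | algebraMap c => ext <;> simp [Algebra.smul_def]
  | ι a => simp
  | mul x y hx hy => rw [map_mul, map_mul, Module.End.mul_apply, hy, hx, mul_assoc]
  | add x y hx hy => simp [hx, hy, add_mul]

variable (K n) in
def extOrbit : Ualg K n →ₗ[K] Λ × Λ :=
  LinearMap.applyₗ ((0, 1) : Λ × Λ) ∘ₗ (extRep K n).toLinearMap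

lemma extOrbit_ofExterior (z : Λ) : extOrbit K n (ofExterior K n z) = (0, z) := by
  change extRep K n (ofExterior K n z) (0, 1) = _
  rw [extRep_ofExterior_apply, mul_one]

lemma extOrbit_lOfExteriorPower {k : ℕ} (hk : k ≠ 1) (x : ⋀[K]^(k + 1) (Fin n → K)) :
    extOrbit K n (lOfExteriorPower K n k hk x) = ((x : Λ), 0) := by
  suffices extOrbit K n ∘ₗ lOfExteriorPower K n k hk =
      LinearMap.inl K Λ Λ ∘ₗ (⋀[K]^(k + 1) (Fin n → K)).subtype from LinearMap.congr_fun this x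
  refine exteriorPower.linearMap_ext (AlternatingMap.ext fun v => ?_)
  simp [lOfExteriorPower_ιMulti, extOrbit, extRep_ofExterior_apply, ιMulti_succ_apply,
    Matrix.vecTail, Fin.tail_def, Function.comp_def]

lemma linearIndependent_rMonomial (k : ℕ) : LinearIndependent K (rMonomial K n k) := by
  refine .of_comp (LinearMap.snd K Λ Λ ∘ₗ extOrbit K n) ?_
  convert (Pi.basisFun K (Fin n)).linearIndependent_exteriorPower k
  simp [rMonomial, extOrbit_ofExterior]

lemma linearIndependent_lMonomial_rMonomial {k : ℕ} (hk : k ≠ 1) :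
    LinearIndependent K (Sum.elim (lMonomial K n k hk) (rMonomial K n (k + 1))) := by
  refine .of_comp (extOrbit K n) ?_
  have : extOrbit K n ∘ Sum.elim (lMonomial K n k hk) (rMonomial K n (k + 1)) =
      Sum.elim (LinearMap.inl K Λ Λ ∘ fun s => ((Pi.basisFun K (Fin n)).exteriorPower _ s : Λ))
        (LinearMap.inr K Λ Λ ∘ fun s => ((Pi.basisFun K (Fin n)).exteriorPower _ s : Λ)) := by
    ext1 (s | s)
    · exact extOrbit_lOfExteriorPower hk _
    · exact extOrbit_ofExterior _
  rw [this]
  exact linearIndependent_inl_union_inr' ((Pi.basisFun K (Fin n)).linearIndependent_exteriorPower _)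
    ((Pi.basisFun K (Fin n)).linearIndependent_exteriorPower _)

-- the components carry the weights `0, 1, 1, 2, 2`: `1`, `l_a`, `r_a`, `l_a r_b`, `r_a r_b`
local notation "M₂" => K × (Fin n → K) × (Fin n → K) × ((Fin n → K) ⊗[K] (Fin n → K)) × Λ

variable (K n) in
def truncL : (Fin n → K) →ₗ[K] Module.End K M₂ :=
  LinearMap.mk₂ K (fun a p => (0, p.1 • a, 0, a ⊗ₜ p.2.2.1, ι K a * ι K p.2.1))
    (by intros; simp [add_mul, TensorProduct.add_tmul])
    (by intros; simp [TensorProduct.smul_tmul', smul_smul, mul_comm])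
    (by intros; simp [add_smul, mul_add, TensorProduct.tmul_add])
    (by intros; simp [mul_smul, TensorProduct.tmul_smul])

variable (K n) in
def truncR : (Fin n → K) →ₗ[K] Module.End K M₂ :=
  LinearMap.mk₂ K
    (fun a p => (0, 0, p.1 • a, p.2.1 ⊗ₜ a, ι K p.2.1 * ι K a + ι K a * ι K p.2.2.1))
    (by intros; simp [add_mul, mul_add, TensorProduct.tmul_add, add_add_add_comm])
    (by intros; simp [smul_smul, mul_comm])
    (by intros; simp [add_smul, add_mul, mul_add, TensorProduct.add_tmul, add_add_add_comm])
    (by intros; simp [mul_smul, TensorProduct.smul_tmul'])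

@[simp] lemma truncL_apply (a : Fin n → K) (p : M₂) :
    truncL K n a p = (0, p.1 • a, 0, a ⊗ₜ p.2.2.1, ι K a * ι K p.2.1) := rfl

@[simp] lemma truncR_apply (a : Fin n → K) (p : M₂) :
    truncR K n a p = (0, 0, p.1 • a, p.2.1 ⊗ₜ a, ι K p.2.1 * ι K a + ι K a * ι K p.2.2.1) := rfl

variable (K n) in
def truncRep : Ualg K n →ₐ[K] Module.End K M₂ :=
  lift (A := Module.End K M₂) (truncL K n) (truncR K n)
    (fun a => LinearMap.ext fun p => by simp)
    (fun a b => LinearMap.ext fun p => by simp [ι_mul_ι_comm b a])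
    (fun a b => LinearMap.ext fun p => by simp [TensorProduct.smul_tmul'])

@[simp] lemma truncRep_lU (a : Fin n → K) : truncRep K n (lU K n a) = truncL K n a := lift_lU a

@[simp] lemma truncRep_rU (a : Fin n → K) : truncRep K n (rU K n a) = truncR K n a := lift_rU a

variable (K n) in
def truncWeightTwo : Ualg K n →ₗ[K] ((Fin n → K) ⊗[K] (Fin n → K)) × Λ :=
  LinearMap.snd K _ _ ∘ₗ LinearMap.snd K _ _ ∘ₗ LinearMap.snd K _ _ ∘ₗ
    LinearMap.applyₗ ((1, 0, 0, 0, 0) : M₂) ∘ₗ (truncRep K n).toLinearMap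

lemma truncWeightTwo_lrMonomial (p : Fin n × Fin n) :
    truncWeightTwo K n (lrMonomial K n p) = (Pi.single p.1 1 ⊗ₜ Pi.single p.2 1, 0) := by
  simp [truncWeightTwo, lrMonomial]

lemma truncWeightTwo_ofExterior (x : ⋀[K]^2 (Fin n → K)) :
    truncWeightTwo K n (ofExterior K n x) = (0, (x : Λ)) := by
  suffices truncWeightTwo K n ∘ₗ (ofExterior K n).toLinearMap ∘ₗ (⋀[K]^2 (Fin n → K)).subtype =
      LinearMap.inr K _ Λ ∘ₗ (⋀[K]^2 (Fin n → K)).subtype from LinearMap.congr_fun this x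
  refine exteriorPower.linearMap_ext (AlternatingMap.ext fun v => ?_)
  simp [truncWeightTwo, ιMulti_succ_apply]

lemma linearIndependent_lrMonomial_rMonomial :
    LinearIndependent K (Sum.elim (lrMonomial K n) (rMonomial K n 2)) := by
  refine .of_comp (truncWeightTwo K n) ?_
  have : truncWeightTwo K n ∘ Sum.elim (lrMonomial K n) (rMonomial K n 2) =
      Sum.elim (LinearMap.inl K _ Λ ∘ (Pi.basisFun K (Fin n)).tensorProduct (Pi.basisFun K (Fin n)))
        (LinearMap.inr K _ Λ ∘ fun s => ((Pi.basisFun K (Fin n)).exteriorPower 2 s : Λ)) := by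
    ext1 (p | s)
    · simp [truncWeightTwo_lrMonomial, Module.Basis.tensorProduct_apply']
    · exact truncWeightTwo_ofExterior _
  rw [this]
  exact linearIndependent_inl_union_inr' (Module.Basis.linearIndependent _)
    ((Pi.basisFun K (Fin n)).linearIndependent_exteriorPower 2)

lemma nonempty_basis_V_pow_zero : Nonempty (Module.Basis (Fin 1) K ↥(V K n ^ 0)) := by
  have hspan : span K (Set.range (rMonomial K n 0)) = V K n ^ 0 := by
    rw [span_rMonomial, pow_zero, pow_zero]
  have h := nonempty_basis_fin_of_span_eq (linearIndependent_rMonomial 0) hspan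
  rwa [Set.powersetCard.card, Nat.card_fin, Nat.choose_zero_right] at h

lemma nonempty_basis_V_pow_succ {k : ℕ} (hk : k ≠ 1) :
    Nonempty (Module.Basis (Fin (2 * n.choose (k + 1))) K ↥(V K n ^ (k + 1))) := by
  have hspan : span K (Set.range (Sum.elim (lMonomial K n k hk) (rMonomial K n (k + 1)))) =
      V K n ^ (k + 1) := by
    rw [Set.Sum.elim_range, span_union, span_lMonomial, span_rMonomial, V_pow_succ]
  have h := nonempty_basis_fin_of_span_eq (linearIndependent_lMonomial_rMonomial hk) hspan
  rwa [Nat.card_sum, Set.powersetCard.card, Nat.card_fin, ← two_mul] at h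

lemma nonempty_basis_V_sq :
    Nonempty (Module.Basis (Fin (n * n + n.choose 2)) K ↥(V K n ^ 2)) := by
  have hspan : span K (Set.range (Sum.elim (lrMonomial K n) (rMonomial K n 2))) = V K n ^ 2 := by
    rw [Set.Sum.elim_range, span_union, span_lrMonomial, span_rMonomial]
    simpa using (V_pow_succ (K := K) (n := n) 1).symm
  have h := nonempty_basis_fin_of_span_eq linearIndependent_lrMonomial_rMonomial hspan
  rwa [Nat.card_sum, Set.powersetCard.card, Nat.card_prod, Nat.card_fin] at h

end Ualg

/-- Over any commutative ring `K`, the weight-`k` component `U(K^n)_k` is a free `K`-module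
of finite rank, of rank `1, 2n, (3n²−n)/2, 2·(n choose k)` for `k = 0, 1, 2, k ≥ 3`. -/
theorem weight_component_free (K : Type) [CommRing K] (n k : ℕ) :
    Nonempty (Module.Basis
      (Fin (if k = 0 then 1
            else if k = 1 then 2 * n
            else if k = 2 then (3 * n ^ 2 - n) / 2
            else 2 * n.choose k))
      K ↥(V K n ^ k)) := by
  rcases k with _ | _ | _ | k
  · exact Ualg.nonempty_basis_V_pow_zero
  · simpa using Ualg.nonempty_basis_V_pow_succ (K := K) (n := n) (k := 0) zero_ne_one
  · simpa [Nat.three_mul_sq_sub_self_div_two] using Ualg.nonempty_basis_V_sq (K := K) (n := n)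
  · simpa using Ualg.nonempty_basis_V_pow_succ (K := K) (n := n) (k := k + 2) (by omega)

end
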